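/- arXiv:1202.5732 — 9 statements merged into one kernel-verified Lean document; each statement's English description precedes it below -/
import Mathlib

section
/- Let K ⊂ ℂ be a quartic CM field (a degree-4 totally imaginary number field stable under complex conjugation), let p be a prime number, and let π ∈ O_K be a Weil p-number with ℚ(π) = K; let π̄ denote the complex conjugate of π, so that π·π̄ = p. If π̄ ∉ ℤ[π], then the index of ℤ[π] in ℤ[π, π̄], as additive abelian groups, equals p. -/
/-!
Write `β = π + π̄`. As `π π̄ = p`, `β π = π² + p ∈ ℤ[π]`; and `β` is a real element of the quartic
CM field `K` that is not rational, so it generates the real quadratic subfield and satisfies a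
monic quadratic over `ℤ`. Hence `ℤ[π, π̄] = ℤ[π] + ℤβ`, and the index is the order of `β` modulo
`ℤ[π]`. All conjugates of `π` have absolute value `√p`, so the constant term of its minimal
polynomial is `±p²`; thus `p π̄ = ±p²/π ∈ ℤ[π]`, whence `pβ ∈ ℤ[π]`. As `β ∉ ℤ[π]` and `p` is prime,
the order is exactly `p`.
-/

open Polynomial IntermediateField Module AddSubgroup

section AdjoinSingleton

variable {R S : Type*} [CommRing R] [CommRing S] [Algebra R S]

theorem Polynomial.aeval_eq_mul_aeval_divX_add (f : R[X]) (x : S) :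
    aeval x f = x * aeval x f.divX + algebraMap R S (f.coeff 0) := by
  conv_lhs => rw [← X_mul_divX_add f]
  rw [map_add, map_mul, aeval_X, aeval_C]

theorem mem_adjoin_singleton_of_mul_eq_neg_coeff_zero [IsDomain S] {x z : S} (hx : x ≠ 0)
    {f : R[X]} (hf : aeval x f = 0) (hz : x * z = -algebraMap R S (f.coeff 0)) :
    z ∈ Algebra.adjoin R {x} := by
  rw [aeval_eq_mul_aeval_divX_add, add_eq_zero_iff_eq_neg, ← hz] at hf
  rw [mul_left_cancel₀ hx hf.symm]
  exact aeval_mem_adjoin_singleton R x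

theorem zsmul_mem_adjoin_singleton_of_mul_eq [IsDomain S] {x y : S} (hx : x ≠ 0) {f : ℤ[X]}
    (hf : aeval x f = 0) {m : ℤ} (hxy : x * y = m) (hc : |f.coeff 0| = m ^ 2) :
    m • y ∈ Algebra.adjoin ℤ {x} := by
  have hmul : x * (m * y) = (m : S) ^ 2 := by rw [mul_left_comm, hxy, sq]
  rw [zsmul_eq_mul]
  rcases (abs_eq (sq_nonneg m)).mp hc with hc | hc
  · exact mem_adjoin_singleton_of_mul_eq_neg_coeff_zero hx (f := -f) (by simp [hf])
      (by simp [hc, hmul])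
  · exact mem_adjoin_singleton_of_mul_eq_neg_coeff_zero hx hf (by simp [hc, hmul])

theorem Polynomial.Monic.mul_self_eq_of_aeval_eq_zero {f : R[X]} (hf : f.Monic)
    (h2 : f.natDegree = 2) {x : S} (hx : aeval x f = 0) :
    x * x = -(f.coeff 1 • x) - algebraMap R S (f.coeff 0) := by
  rw [hf.as_sum, h2] at hx
  simp only [Finset.sum_range_succ, Finset.sum_range_zero, map_add, map_pow, aeval_X,
    map_mul, aeval_C, pow_zero, pow_one, mul_one, zero_add] at hx
  rw [Algebra.smul_def]
  linear_combination hx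

end AdjoinSingleton

section SupZMultiples

variable {S : Type*} [CommRing S]

theorem mul_mem_sup_zmultiples (A : Subring S) {β : S}
    (hβA : ∀ a ∈ A, β * a ∈ A.toAddSubgroup ⊔ zmultiples β)
    (hββ : β * β ∈ A.toAddSubgroup ⊔ zmultiples β) {x y : S}
    (hx : x ∈ A.toAddSubgroup ⊔ zmultiples β) (hy : y ∈ A.toAddSubgroup ⊔ zmultiples β) :
    x * y ∈ A.toAddSubgroup ⊔ zmultiples β := by
  obtain ⟨a, ha, _, ⟨m, rfl⟩, rfl⟩ := mem_sup.mp hx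
  obtain ⟨b, hb, _, ⟨n, rfl⟩, rfl⟩ := mem_sup.mp hy
  have hexpand : (a + m • β) * (b + n • β) =
      a * b + m • (β * b) + n • (β * a) + (m * n) • (β * β) := by
    simp only [zsmul_eq_mul]; push_cast; ring
  rw [hexpand]
  exact add_mem (add_mem (add_mem (mem_sup_left (A.mul_mem ha hb)) (zsmul_mem (hβA b hb) m))
    (zsmul_mem (hβA a ha) n)) (zsmul_mem hββ _)

theorem mul_mem_sup_zmultiples_of_mul_mem {x β : S} (h : β * x ∈ Algebra.adjoin ℤ {x}) {a : S}
    (ha : a ∈ Algebra.adjoin ℤ {x}) :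
    β * a ∈ (Algebra.adjoin ℤ {x}).toSubring.toAddSubgroup ⊔ zmultiples β := by
  rw [Algebra.adjoin_singleton_eq_range_aeval] at ha
  obtain ⟨f, rfl⟩ := ha
  rw [AlgHom.toRingHom_eq_coe, RingHom.coe_coe, aeval_eq_mul_aeval_divX_add, mul_add, ← mul_assoc,
    eq_intCast, mul_comm β (f.coeff 0 : S), ← zsmul_eq_mul]
  exact add_mem (mem_sup_left (Subalgebra.mul_mem _ h (aeval_mem_adjoin_singleton ℤ x)))
    (mem_sup_right (zsmul_mem_zmultiples β _))

theorem toAddSubgroup_adjoin_pair_eq_sup_zmultiples {x y : S} {m : ℤ} (hxy : x * y = m)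
    (hsq : (x + y) * (x + y) ∈
      (Algebra.adjoin ℤ {x}).toSubring.toAddSubgroup ⊔ zmultiples (x + y)) :
    (Algebra.adjoin ℤ {x, y}).toSubring.toAddSubgroup =
      (Algebra.adjoin ℤ {x}).toSubring.toAddSubgroup ⊔ zmultiples (x + y) := by
  set A := Algebra.adjoin ℤ {x}
  have hxA : x ∈ A := Algebra.self_mem_adjoin_singleton ℤ x
  have hβx : (x + y) * x ∈ A := by
    rw [add_mul, mul_comm y x, hxy]
    exact add_mem (mul_mem hxA hxA) (intCast_mem A m)
  let T : Subring S :=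
    { A.toSubring.toAddSubgroup ⊔ zmultiples (x + y) with
      one_mem' := mem_sup_left A.one_mem
      mul_mem' := mul_mem_sup_zmultiples A.toSubring
        (fun _ ha ↦ mul_mem_sup_zmultiples_of_mul_mem hβx ha) hsq }
  apply le_antisymm
  · have hyT : y ∈ T := by
      rw [show y = x + y - x by ring]
      exact sub_mem (mem_sup_right (mem_zmultiples _)) (mem_sup_left hxA)
    exact Algebra.adjoin_le (S := subalgebraOfSubring T)
      (Set.insert_subset (mem_sup_left hxA) (Set.singleton_subset_iff.mpr hyT))
  · refine sup_le (Algebra.adjoin_mono (R := ℤ) (Set.singleton_subset_iff.mpr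
      (Set.mem_insert x {y}))) (zmultiples_le_of_mem ?_)
    exact add_mem (Algebra.subset_adjoin (Set.mem_insert x {y}))
      (Algebra.subset_adjoin (Set.mem_insert_of_mem x rfl))

end SupZMultiples

theorem AddSubgroup.relIndex_sup_zmultiples {G : Type*} [AddCommGroup G] (A : AddSubgroup G)
    (β : G) : A.relIndex (A ⊔ zmultiples β) = (A.comap (zmultiplesHom G β)).index := by
  rw [relIndex_sup_left, index_comap, range_zmultiplesHom]

theorem AddSubgroup.comap_zmultiplesHom_eq_zmultiples_of_prime {G : Type*} [AddCommGroup G]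
    {A : AddSubgroup G} {β : G} {p : ℕ} (hp : p.Prime) (hβ : β ∉ A) (hpβ : (p : ℤ) • β ∈ A) :
    A.comap (zmultiplesHom G β) = zmultiples (p : ℤ) := by
  ext n
  rw [mem_comap, zmultiplesHom_apply, Int.mem_zmultiples_iff]
  constructor
  · intro hn
    by_contra hpn
    obtain ⟨u, v, huv⟩ := ((Nat.prime_iff_prime_int.mp hp).coprime_iff_not_dvd).mpr hpn
    refine hβ ?_
    rw [← one_smul ℤ β, ← huv, add_smul, mul_smul, mul_smul]
    exact add_mem (zsmul_mem hpβ u) (zsmul_mem hn v)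
  · rintro ⟨k, rfl⟩
    rw [mul_comm, mul_smul]
    exact zsmul_mem hpβ k

theorem abs_coeff_zero_minpoly_int_eq_pow {x : ℂ} (hx : IsIntegral ℤ x) {r : ℝ}
    (h : ∀ φ : ℚ⟮x⟯ →+* ℂ, ‖φ (AdjoinSimple.gen ℚ x)‖ = r) :
    |((minpoly ℤ x).coeff 0 : ℝ)| = r ^ (minpoly ℤ x).natDegree := by
  set f := minpoly ℤ x
  have hmonic : (f.map (algebraMap ℤ ℂ)).Monic := (minpoly.monic hx).map _
  have hsplit : (f.map (algebraMap ℤ ℂ)).Splits := IsAlgClosed.splits _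
  have hroots : ∀ z ∈ (f.map (algebraMap ℤ ℂ)).roots, ‖z‖ = r := by
    intro z hz
    rw [← aroots_def, ← aroots_map ℂ ℚ f,
      ← minpoly.isIntegrallyClosed_eq_field_fractions' ℚ hx] at hz
    have hφ := h ((algHomAdjoinIntegralEquiv ℚ hx.tower_top).symm ⟨z, hz⟩)
    rwa [AlgHom.coe_toRingHom, algHomAdjoinIntegralEquiv_symm_apply_gen] at hφ
  have hcoeff := hsplit.coeff_zero_eq_leadingCoeff_mul_prod_roots
  rw [hmonic.leadingCoeff, coeff_map] at hcoeff
  rw [← Complex.norm_intCast, ← eq_intCast (algebraMap ℤ ℂ), hcoeff]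
  simp only [norm_mul, norm_pow, norm_neg, norm_one, one_pow, one_mul]
  calc ‖(f.map (algebraMap ℤ ℂ)).roots.prod‖
      = ((f.map (algebraMap ℤ ℂ)).roots.map (‖·‖)).prod :=
        map_multiset_prod (normHom : ℂ →*₀ ℝ) _
    _ = r ^ f.natDegree := by
      rw [Multiset.map_congr rfl hroots, Multiset.map_const', Multiset.prod_replicate,
        ← hsplit.natDegree_eq_card_roots, (minpoly.monic hx).natDegree_map]

theorem natDegree_minpoly_int_eq_finrank {L : Type*} [Field L] [CharZero L] {x : L}
    (hx : IsIntegral ℤ x) : (minpoly ℤ x).natDegree = finrank ℚ ℚ⟮x⟯ := by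
  rw [adjoin.finrank hx.tower_top, minpoly.isIntegrallyClosed_eq_field_fractions' ℚ hx,
    (minpoly.monic hx).natDegree_map]

theorem exists_intCast_eq_of_mem_bot {L : Type*} [Field L] [CharZero L] {x : L}
    (hx : IsIntegral ℤ x) (hbot : x ∈ (⊥ : IntermediateField ℚ L)) : ∃ n : ℤ, (n : L) = x := by
  obtain ⟨q, rfl⟩ := mem_bot.mp hbot
  obtain ⟨n, rfl⟩ := IsIntegrallyClosed.isIntegral_iff.mp
    (hx.tower_bot (algebraMap ℚ L).injective)
  exact ⟨n, by simp⟩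

theorem nonempty_ringHom_real_of_im_eq_zero {b : ℂ} (hb : IsIntegral ℚ b) (him : b.im = 0) :
    Nonempty (ℚ⟮b⟯ →+* ℝ) := by
  have hre : algebraMap ℝ ℂ b.re = b := Complex.ext (by simp) (by simp [him])
  have hroot : b.re ∈ (minpoly ℚ b).aroots ℝ := by
    refine mem_aroots.mpr ⟨minpoly.ne_zero hb, (algebraMap ℝ ℂ).injective ?_⟩
    rw [← aeval_algebraMap_apply, hre, minpoly.aeval, map_zero]
  exact ⟨((algHomAdjoinIntegralEquiv ℚ hb).symm ⟨b.re, hroot⟩).toRingHom⟩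

theorem finrank_adjoin_eq_two_of_im_eq_zero {K : IntermediateField ℚ ℂ}
    (hdeg : finrank ℚ K = 4) (himag : IsEmpty (K →+* ℝ)) {b : ℂ} (hbK : b ∈ K)
    (him : b.im = 0) (hbQ : b ∉ (⊥ : IntermediateField ℚ ℂ)) : finrank ℚ ℚ⟮b⟯ = 2 := by
  have : FiniteDimensional ℚ K := .of_finrank_pos (by omega)
  have hle : ℚ⟮b⟯ ≤ K := adjoin_simple_le_iff.mpr hbK
  have hdvd : finrank ℚ ℚ⟮b⟯ ∣ 4 := hdeg ▸ finrank_dvd_of_le_right hle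
  have hne_one : finrank ℚ ℚ⟮b⟯ ≠ 1 := by
    rwa [ne_eq, IntermediateField.finrank_eq_one_iff, adjoin_simple_eq_bot_iff]
  have hne_four : finrank ℚ ℚ⟮b⟯ ≠ 4 := fun h ↦ by
    have heq : ℚ⟮b⟯ = K := eq_of_le_of_finrank_eq hle (h.trans hdeg.symm)
    have hb : IsIntegral ℚ b := (IsIntegral.of_finite ℚ (⟨b, hbK⟩ : K)).map K.val
    obtain ⟨φ⟩ := nonempty_ringHom_real_of_im_eq_zero hb him
    exact himag.false (φ.comp (equivOfEq heq.symm).toRingHom)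
  have hle_four := Nat.le_of_dvd (by norm_num) hdvd
  interval_cases finrank ℚ ℚ⟮b⟯ <;> simp_all

/-- Let `K ⊂ ℂ` be a quartic CM field (degree 4, totally imaginary, stable under
complex conjugation), `p` a prime, and `π ∈ O_K` a Weil `p`-number with `ℚ(π) = K`; let `π̄` be
its complex conjugate, so `π·π̄ = p`. If `π̄ ∉ ℤ[π]`, then the index of `ℤ[π]` in `ℤ[π, π̄]`
as additive abelian groups equals `p`. -/
theorem stmt0 (K : IntermediateField ℚ ℂ)
    (hdeg : Module.finrank ℚ K = 4)
    (himag : IsEmpty (K →+* ℝ))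
    (hstable : ∀ x ∈ K, (starRingEnd ℂ) x ∈ K)
    (p : ℕ) (hp : p.Prime)
    (π : ℂ) (hπK : π ∈ K)
    (hint : IsIntegral ℤ π)
    (hweil : ∀ φ : K →+* ℂ, ‖φ ⟨π, hπK⟩‖ = Real.sqrt p)
    (hgen : IntermediateField.adjoin ℚ {π} = K)
    (hnorm : π * (starRingEnd ℂ) π = (p : ℂ))
    (hnotin : (starRingEnd ℂ) π ∉ Algebra.adjoin ℤ ({π} : Set ℂ)) :
    AddSubgroup.relIndex
        (Algebra.adjoin ℤ ({π} : Set ℂ)).toSubring.toAddSubgroup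
        (Algebra.adjoin ℤ ({π, (starRingEnd ℂ) π} : Set ℂ)).toSubring.toAddSubgroup = p := by
  subst hgen
  set β := π + starRingEnd ℂ π
  set A := Algebra.adjoin ℤ ({π} : Set ℂ)
  have hnorm' : π * starRingEnd ℂ π = ((p : ℤ) : ℂ) := by exact_mod_cast hnorm
  have hπ0 : π ≠ 0 := by
    rintro rfl
    exact hp.ne_zero (by exact_mod_cast hnorm.symm.trans (zero_mul _))
  have hπA : π ∈ A := Algebra.self_mem_adjoin_singleton ℤ π
  have hβA : β ∉ A := fun h ↦ hnotin (by simpa [β] using sub_mem h hπA)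
  have hβint : IsIntegral ℤ β := hint.add (hint.map (starRingEnd ℂ).toIntAlgHom)
  have hβ2 : (minpoly ℤ β).natDegree = 2 := by
    rw [natDegree_minpoly_int_eq_finrank hβint]
    refine finrank_adjoin_eq_two_of_im_eq_zero hdeg himag (add_mem hπK (hstable π hπK))
      (by simp [β]) fun hβQ ↦ hβA ?_
    obtain ⟨n, hn⟩ := exists_intCast_eq_of_mem_bot hβint hβQ
    exact hn ▸ intCast_mem A n
  have hcoeff : |(minpoly ℤ π).coeff 0| = (p : ℤ) ^ 2 := by
    have h := abs_coeff_zero_minpoly_int_eq_pow hint hweil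
    rw [natDegree_minpoly_int_eq_finrank hint, hdeg, show 4 = 2 * 2 by rfl, pow_mul,
      Real.sq_sqrt p.cast_nonneg] at h
    exact_mod_cast h
  have hpβ : (p : ℤ) • β ∈ A := smul_add (p : ℤ) π _ ▸ add_mem (zsmul_mem hπA _)
    (zsmul_mem_adjoin_singleton_of_mul_eq hπ0 (minpoly.aeval ℤ π) hnorm' hcoeff)
  have hββ : β * β ∈ A.toSubring.toAddSubgroup ⊔ zmultiples β := by
    rw [(minpoly.monic hβint).mul_self_eq_of_aeval_eq_zero hβ2 (minpoly.aeval ℤ β)]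
    exact sub_mem (neg_mem (mem_sup_right (zsmul_mem_zmultiples β _)))
      (mem_sup_left (algebraMap_mem A _))
  rw [toAddSubgroup_adjoin_pair_eq_sup_zmultiples hnorm' hββ, relIndex_sup_zmultiples,
    comap_zmultiplesHom_eq_zmultiples_of_prime hp hβA hpβ, Int.index_zmultiples,
    Int.natAbs_natCast]
end

section
/- Let p be a prime number and A, B, C, D ∈ ℤ satisfy A² + 5B² + 5C² + 5D² = 16p and AB + C² + CD − D² = 0. Define the four complex numbers π₁ = (1/4)(A + B√5 + C·i√(5+2√5) + D·i√(5−2√5)), π₂ = (1/4)(A − B√5 − D·i√(5+2√5) + C·i√(5−2√5)), π₃ = conj(π₁), π₄ = conj(π₂). Then ∏_{1 ≤ i < j ≤ 4} (π_i − π_j)² = (125/16)·p²·B⁴·(C² − 4CD − D²)². -/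
/-!
Pair the six differences as `(π₁ - π₂)(π₃ - π₄)`, `(π₁ - π₄)(π₂ - π₃)` and `(π₁ - π₃)(π₂ - π₄)`.
In each pair `A` cancels, and the relations `i² = -1`, `√5² = 5`, `√(5 ± 2√5)² = 5 ± 2√5`,
`√(5 + 2√5) √(5 - 2√5) = √5` turn the three products into `(X + √5 Y)/8`, `(-X + √5 Y)/8`
and `√5 Y/4`, where `X = 10B² + 5C² + 5D²` and `Y = D² + 4CD - C²`. The Weil condition makes the norm
`X² - 5Y²` equal to `320 p B²`, so the discriminant is
`((5Y² - X²)/64)² · 5Y²/16 = (125/16) p² B⁴ Y²`.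
-/

theorem Real.sqrt_five_add_two_sqrt_five_mul_sqrt_five_sub_two_sqrt_five :
    √(5 + 2 * √5) * √(5 - 2 * √5) = √5 := by
  have h5 : √5 ^ 2 = 5 := Real.sq_sqrt (by norm_num)
  rw [← Real.sqrt_mul (by positivity)]
  congr 1
  linear_combination (-4 : ℝ) * h5

theorem Real.five_sub_two_sqrt_five_nonneg : 0 ≤ 5 - 2 * √5 := by
  nlinarith [Real.sq_sqrt (show (0 : ℝ) ≤ 5 by norm_num), Real.sqrt_nonneg 5]

theorem sq_sub_five_mul_sq_eq_of_weil {R : Type*} [CommRing R] {a b c d n : R}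
    (h1 : a ^ 2 + 5 * b ^ 2 + 5 * c ^ 2 + 5 * d ^ 2 = 16 * n)
    (h2 : a * b + c ^ 2 + c * d - d ^ 2 = 0) :
    (10 * b ^ 2 + 5 * c ^ 2 + 5 * d ^ 2) ^ 2 - 5 * (d ^ 2 + 4 * c * d - c ^ 2) ^ 2
      = 320 * n * b ^ 2 := by
  linear_combination (20 * b ^ 2) * h1 - (20 * (a * b - c ^ 2 - c * d + d ^ 2)) * h2

theorem discriminant_eq_of_relations {K : Type*} [Field K] [CharZero K] {s t u i : K}
    (hs : s ^ 2 = 5) (ht : t ^ 2 = 5 + 2 * s) (hu : u ^ 2 = 5 - 2 * s) (htu : t * u = s)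
    (hi : i ^ 2 = -1) (a b c d : K) :
    let x₁ := (a + b * s + c * t * i + d * u * i) / 4
    let x₂ := (a - b * s - d * t * i + c * u * i) / 4
    let x₃ := (a + b * s - c * t * i - d * u * i) / 4
    let x₄ := (a - b * s + d * t * i - c * u * i) / 4
    (x₁ - x₂) ^ 2 * (x₁ - x₃) ^ 2 * (x₁ - x₄) ^ 2 * (x₂ - x₃) ^ 2 * (x₂ - x₄) ^ 2 *
        (x₃ - x₄) ^ 2
      = 5 * ((10 * b ^ 2 + 5 * c ^ 2 + 5 * d ^ 2) ^ 2 - 5 * (d ^ 2 + 4 * c * d - c ^ 2) ^ 2) ^ 2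
          * (d ^ 2 + 4 * c * d - c ^ 2) ^ 2 / 65536 := by
  intro x₁ x₂ x₃ x₄
  set X := 10 * b ^ 2 + 5 * c ^ 2 + 5 * d ^ 2
  set Y := d ^ 2 + 4 * c * d - c ^ 2
  have h₁₂₃₄ : (x₁ - x₂) * (x₃ - x₄) = (X + s * Y) / 8 := by
    linear_combination (b ^ 2 / 4) * hs - (((c + d) * t + (d - c) * u) ^ 2 / 16) * hi
      + ((c + d) ^ 2 / 16) * ht + ((d - c) ^ 2 / 16) * hu + ((d ^ 2 - c ^ 2) / 8) * htu
  have h₁₄₂₃ : (x₁ - x₄) * (x₂ - x₃) = (-X + s * Y) / 8 := by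
    linear_combination (-b ^ 2 / 4) * hs + (((c - d) * t + (c + d) * u) ^ 2 / 16) * hi
      - ((c - d) ^ 2 / 16) * ht - ((c + d) ^ 2 / 16) * hu - ((c ^ 2 - d ^ 2) / 8) * htu
  have h₁₃₂₄ : (x₁ - x₃) * (x₂ - x₄) = s * Y / 4 := by
    linear_combination ((c * t + d * u) * (c * u - d * t) / 4) * hi
      + (c * d / 4) * ht - (c * d / 4) * hu + ((d ^ 2 - c ^ 2) / 4) * htu
  have hnorm : (X + s * Y) / 8 * ((-X + s * Y) / 8) = -(X ^ 2 - 5 * Y ^ 2) / 64 := by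
    linear_combination Y ^ 2 / 64 * hs
  have hsq : (s * Y / 4) ^ 2 = 5 * Y ^ 2 / 16 := by
    linear_combination Y ^ 2 / 16 * hs
  calc _ = ((x₁ - x₂) * (x₃ - x₄) * ((x₁ - x₄) * (x₂ - x₃))) ^ 2
          * ((x₁ - x₃) * (x₂ - x₄)) ^ 2 := by ring
    _ = (-(X ^ 2 - 5 * Y ^ 2) / 64) ^ 2 * (5 * Y ^ 2 / 16) := by
      rw [h₁₂₃₄, h₁₄₂₃, h₁₃₂₄, hnorm, hsq]
    _ = _ := by ring

theorem stmt1_general (p : ℕ) (A B C D : ℤ)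
    (h1 : A ^ 2 + 5 * B ^ 2 + 5 * C ^ 2 + 5 * D ^ 2 = 16 * (p : ℤ))
    (h2 : A * B + C ^ 2 + C * D - D ^ 2 = 0) :
    let s5 : ℝ := Real.sqrt 5
    let sp : ℝ := Real.sqrt (5 + 2 * Real.sqrt 5)
    let sm : ℝ := Real.sqrt (5 - 2 * Real.sqrt 5)
    let π₁ : ℂ := ((A : ℂ) + (B : ℂ) * (s5 : ℂ) + (C : ℂ) * (sp : ℂ) * Complex.I
        + (D : ℂ) * (sm : ℂ) * Complex.I) / 4
    let π₂ : ℂ := ((A : ℂ) - (B : ℂ) * (s5 : ℂ) - (D : ℂ) * (sp : ℂ) * Complex.I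
        + (C : ℂ) * (sm : ℂ) * Complex.I) / 4
    let π₃ : ℂ := (starRingEnd ℂ) π₁
    let π₄ : ℂ := (starRingEnd ℂ) π₂
    (π₁ - π₂) ^ 2 * (π₁ - π₃) ^ 2 * (π₁ - π₄) ^ 2 * (π₂ - π₃) ^ 2 * (π₂ - π₄) ^ 2 *
        (π₃ - π₄) ^ 2
      = (125 / 16 : ℂ) * (p : ℂ) ^ 2 * (B : ℂ) ^ 4 *
          ((C : ℂ) ^ 2 - 4 * (C : ℂ) * (D : ℂ) - (D : ℂ) ^ 2) ^ 2 := by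
  intro s5 sp sm π₁ π₂ π₃ π₄
  have hs : ((s5 : ℝ) : ℂ) ^ 2 = 5 := by
    rw [← Complex.ofReal_pow, Real.sq_sqrt (by norm_num)]; norm_num
  have ht : ((sp : ℝ) : ℂ) ^ 2 = 5 + 2 * s5 := by
    rw [← Complex.ofReal_pow, Real.sq_sqrt (by positivity)]; push_cast; rfl
  have hu : ((sm : ℝ) : ℂ) ^ 2 = 5 - 2 * s5 := by
    rw [← Complex.ofReal_pow, Real.sq_sqrt Real.five_sub_two_sqrt_five_nonneg]; push_cast; rfl
  have htu : ((sp : ℝ) : ℂ) * sm = s5 := by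
    rw [← Complex.ofReal_mul, Real.sqrt_five_add_two_sqrt_five_mul_sqrt_five_sub_two_sqrt_five]
  have hπ₃ : π₃ = (A + B * s5 - C * sp * Complex.I - D * sm * Complex.I) / 4 := by
    simp only [π₃, π₁, map_div₀, map_add, map_mul, Complex.conj_I,
      Complex.conj_ofReal, map_intCast, map_ofNat]
    ring
  have hπ₄ : π₄ = (A - B * s5 + D * sp * Complex.I - C * sm * Complex.I) / 4 := by
    simp only [π₄, π₂, map_div₀, map_add, map_sub, map_mul, Complex.conj_I,
      Complex.conj_ofReal, map_intCast, map_ofNat]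
    ring
  have hnorm := sq_sub_five_mul_sq_eq_of_weil (n := (p : ℂ))
    (by exact_mod_cast h1 : (A : ℂ) ^ 2 + 5 * (B : ℂ) ^ 2 + 5 * (C : ℂ) ^ 2 + 5 * (D : ℂ) ^ 2
      = 16 * (p : ℂ))
    (by exact_mod_cast h2 : (A : ℂ) * B + (C : ℂ) ^ 2 + C * D - (D : ℂ) ^ 2 = 0)
  rw [hπ₃, hπ₄, discriminant_eq_of_relations hs ht hu htu Complex.I_sq, hnorm]
  ring

/-- With `A² + 5B² + 5C² + 5D² = 16p` and `AB + C² + CD − D² = 0`,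
the discriminant of the Weil `p`-number `π₁` in `ℚ(ζ₅)` is
`∏_{1≤i<j≤4} (πᵢ − πⱼ)² = (125/16)·p²·B⁴·(C² − 4CD − D²)²`. -/
theorem stmt1 (p : ℕ) (hp : p.Prime) (A B C D : ℤ)
    (h1 : A ^ 2 + 5 * B ^ 2 + 5 * C ^ 2 + 5 * D ^ 2 = 16 * (p : ℤ))
    (h2 : A * B + C ^ 2 + C * D - D ^ 2 = 0) :
    let s5 : ℝ := Real.sqrt 5
    let sp : ℝ := Real.sqrt (5 + 2 * Real.sqrt 5)
    let sm : ℝ := Real.sqrt (5 - 2 * Real.sqrt 5)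
    let π₁ : ℂ := ((A : ℂ) + (B : ℂ) * (s5 : ℂ) + (C : ℂ) * (sp : ℂ) * Complex.I
        + (D : ℂ) * (sm : ℂ) * Complex.I) / 4
    let π₂ : ℂ := ((A : ℂ) - (B : ℂ) * (s5 : ℂ) - (D : ℂ) * (sp : ℂ) * Complex.I
        + (C : ℂ) * (sm : ℂ) * Complex.I) / 4
    let π₃ : ℂ := (starRingEnd ℂ) π₁
    let π₄ : ℂ := (starRingEnd ℂ) π₂
    (π₁ - π₂) ^ 2 * (π₁ - π₃) ^ 2 * (π₁ - π₄) ^ 2 * (π₂ - π₃) ^ 2 * (π₂ - π₄) ^ 2 *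
        (π₃ - π₄) ^ 2
      = (125 / 16 : ℂ) * (p : ℂ) ^ 2 * (B : ℂ) ^ 4 *
          ((C : ℂ) ^ 2 - 4 * (C : ℂ) * (D : ℂ) - (D : ℂ) ^ 2) ^ 2 :=
  stmt1_general p A B C D h1 h2
end

section
/- Let p ∈ ℂ and let x₀, x₁, x₂, x₃ ∈ ℂ satisfy x₀·x₂ = p and x₁·x₃ = p. With indices read modulo 4, set T₁ = Σ_{k=0}^{3} (x_k − x_{k+1})(x_k − x_{k+3}) and T₂ = Σ_{k=0}^{3} x_k·x_{k+1}·(x_k − x_{k+2})·(x_{k+1} − x_{k+3}). Then ∏_{0 ≤ i < j ≤ 3} (x_i − x_j)² = p²·T₁²·T₂. -/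
/-!
Both cyclic sums are perfect squares: identically `T₂ = ((x₀ - x₂)(x₁ - x₃))²` and
`T₁ = s²` with `s = x₀ + x₂ - x₁ - x₃`. The relation `x₀x₂ = x₁x₃` (both equal `p`) turns
`(x₀ - x₁)(x₀ - x₃)` into `x₀ s` and `(x₂ - x₁)(x₂ - x₃)` into `x₂ s`, so the four factors of
the discriminant involving one even and one odd index multiply to `(x₀x₂)² s⁴ = p² T₁²`, and the
remaining two give `T₂`.
-/

section CommRing

variable {R : Type*} [CommRing R]

theorem sub_mul_sub_eq_mul_of_mul_eq_mul {a b c d : R} (h : a * c = b * d) :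
    (a - b) * (a - d) = a * (a + c - b - d) := by
  linear_combination -h

theorem sum_fin_four_sub_mul_sub (x : Fin 4 → R) :
    ∑ k : Fin 4, (x k - x (k + 1)) * (x k - x (k + 3)) = (x 0 + x 2 - x 1 - x 3) ^ 2 := by
  simp only [Fin.sum_univ_four, Fin.reduceAdd]
  ring

theorem sum_fin_four_mul_mul_sub_mul_sub (x : Fin 4 → R) :
    ∑ k : Fin 4, x k * x (k + 1) * (x k - x (k + 2)) * (x (k + 1) - x (k + 3)) =
      ((x 0 - x 2) * (x 1 - x 3)) ^ 2 := by
  simp only [Fin.sum_univ_four, Fin.reduceAdd]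
  ring

end CommRing

/-- Let `p ∈ ℂ` and `x₀, x₁, x₂, x₃ ∈ ℂ` with `x₀·x₂ = p` and `x₁·x₃ = p`.
With indices read mod 4, set `T₁ = Σ_k (x_k − x_{k+1})(x_k − x_{k+3})` and
`T₂ = Σ_k x_k·x_{k+1}·(x_k − x_{k+2})·(x_{k+1} − x_{k+3})`.
Then `∏_{i<j} (x_i − x_j)² = p²·T₁²·T₂`. -/
theorem stmt6 (p : ℂ) (x : Fin 4 → ℂ) (h02 : x 0 * x 2 = p) (h13 : x 1 * x 3 = p) :
    let T₁ : ℂ := ∑ k : Fin 4, (x k - x (k + 1)) * (x k - x (k + 3))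
    let T₂ : ℂ := ∑ k : Fin 4, x k * x (k + 1) * (x k - x (k + 2)) * (x (k + 1) - x (k + 3))
    (x 0 - x 1) ^ 2 * (x 0 - x 2) ^ 2 * (x 0 - x 3) ^ 2 * (x 1 - x 2) ^ 2 *
        (x 1 - x 3) ^ 2 * (x 2 - x 3) ^ 2 = p ^ 2 * T₁ ^ 2 * T₂ := by
  intro T₁ T₂
  have hT₁ : T₁ = (x 0 + x 2 - x 1 - x 3) ^ 2 := sum_fin_four_sub_mul_sub x
  have hT₂ : T₂ = ((x 0 - x 2) * (x 1 - x 3)) ^ 2 := sum_fin_four_mul_mul_sub_mul_sub x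
  have h_even : x 0 * x 2 = x 1 * x 3 := h02.trans h13.symm
  have h₀ := sub_mul_sub_eq_mul_of_mul_eq_mul h_even
  have h₂ := sub_mul_sub_eq_mul_of_mul_eq_mul ((mul_comm _ _).trans h_even)
  calc (x 0 - x 1) ^ 2 * (x 0 - x 2) ^ 2 * (x 0 - x 3) ^ 2 * (x 1 - x 2) ^ 2 *
        (x 1 - x 3) ^ 2 * (x 2 - x 3) ^ 2
      = ((x 0 - x 1) * (x 0 - x 3)) ^ 2 * ((x 2 - x 1) * (x 2 - x 3)) ^ 2 *
          ((x 0 - x 2) * (x 1 - x 3)) ^ 2 := by ring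
    _ = (x 0 * x 2) ^ 2 * ((x 0 + x 2 - x 1 - x 3) ^ 2) ^ 2 *
          ((x 0 - x 2) * (x 1 - x 3)) ^ 2 := by rw [h₀, h₂]; ring
    _ = p ^ 2 * T₁ ^ 2 * T₂ := by rw [h02, hT₁, hT₂]
end

section
/- Let b be an even integer, c an odd integer, and set d = b² + c². Let C, D be integers such that 16 divides ((b/2)·(C² − D²) + cCD)² + d·(1 + C² + D²) and 4 divides cC² − 2bCD − cD². Then C and D are both odd. -/
/-!
Reducing `4 ∣ c C² − 2bCD − c D²` mod 2 gives `C² ≡ D²`, so `C` and `D` have the same parity.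
If both were even, the square in the first condition would be divisible by `16`, forcing
`4 ∣ (b² + c²)(1 + C² + D²)` with the second factor odd; but `b² + c² ≡ 1, 2 (mod 4)` since `c` is odd.
-/

theorem Int.not_four_dvd_sq_add_sq_of_odd {c : ℤ} (b : ℤ) (hc : Odd c) :
    ¬ (4 : ℤ) ∣ b ^ 2 + c ^ 2 := by
  have hc2 := Int.sq_mod_four_eq_one_of_odd hc
  rcases Int.even_or_odd b with ⟨k, rfl⟩ | hb
  · have hb2 : (k + k) ^ 2 = 4 * k ^ 2 := by ring
    omega
  · have hb2 := Int.sq_mod_four_eq_one_of_odd hb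
    omega

theorem Int.even_iff_even_of_two_dvd_form {b c C D : ℤ} (hc : Odd c)
    (h : (2 : ℤ) ∣ c * C ^ 2 - 2 * b * C * D - c * D ^ 2) : Even C ↔ Even D := by
  rw [← even_iff_two_dvd] at h
  simp only [Int.even_sub, Int.even_mul, Int.even_pow] at h
  simp_all [← Int.not_odd_iff_even]

theorem Int.sixteen_dvd_sq_of_even {C D : ℤ} (a c : ℤ) (hC : Even C) (hD : Even D) :
    (16 : ℤ) ∣ (a * (C ^ 2 - D ^ 2) + c * C * D) ^ 2 := by
  obtain ⟨x, rfl⟩ := hC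
  obtain ⟨y, rfl⟩ := hD
  exact ⟨(a * (x ^ 2 - y ^ 2) + c * x * y) ^ 2, by ring⟩

theorem stmt10_general (b c : ℤ) (hc : Odd c) (C D : ℤ)
    (h16 : (16 : ℤ) ∣ ((b / 2) * (C ^ 2 - D ^ 2) + c * C * D) ^ 2
        + (b ^ 2 + c ^ 2) * (1 + C ^ 2 + D ^ 2))
    (h4 : (4 : ℤ) ∣ c * C ^ 2 - 2 * b * C * D - c * D ^ 2) :
    Odd C ∧ Odd D := by
  have hCD : Even C ↔ Even D := Int.even_iff_even_of_two_dvd_form hc (dvd_trans (by norm_num) h4)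
  rcases Int.even_or_odd C with hC | hC
  · have hD : Even D := hCD.1 hC
    have hodd : Odd (1 + C ^ 2 + D ^ 2) := by simp [Int.odd_add, parity_simps, hC, hD]
    have h16' : (16 : ℤ) ∣ (b ^ 2 + c ^ 2) * (1 + C ^ 2 + D ^ 2) :=
      (dvd_add_right (Int.sixteen_dvd_sq_of_even _ c hC hD)).1 h16
    have h4' : (4 : ℤ) ∣ (b ^ 2 + c ^ 2) * (1 + C ^ 2 + D ^ 2) := dvd_trans (by norm_num) h16'
    exact absurd (((Int.isCoprime_two_left.2 hodd).pow_left (m := 2)).dvd_of_dvd_mul_right h4')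
      (Int.not_four_dvd_sq_add_sq_of_odd b hc)
  · exact ⟨hC, Int.not_even_iff_odd.1 (hCD.not.1 (Int.not_even_iff_odd.2 hC))⟩

/-- Let `b` be even, `c` odd, `d = b² + c²`. If `16` divides
`((b/2)(C² − D²) + cCD)² + d(1 + C² + D²)` and `4` divides `cC² − 2bCD − cD²`,
then `C` and `D` are both odd. -/
theorem stmt10 (b c : ℤ) (hb : Even b) (hc : Odd c) (C D : ℤ)
    (h16 : (16 : ℤ) ∣ ((b / 2) * (C ^ 2 - D ^ 2) + c * C * D) ^ 2
        + (b ^ 2 + c ^ 2) * (1 + C ^ 2 + D ^ 2))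
    (h4 : (4 : ℤ) ∣ c * C ^ 2 - 2 * b * C * D - c * D ^ 2) :
    Odd C ∧ Odd D :=
  stmt10_general b c hc C D h16 h4
end

section
/- Let b, c be integers with b even and 3 not dividing b, set d = b² + c², and assume d ≡ 13 (mod 24). Let C, D be integers such that p := (1/16)(((b/2)·(C² − D²) + cCD)² + d·(1 + C² + D²)) is a prime number with p ≥ 5 and I := (1/4)|cC² − 2bCD − cD²| is an integer. Then 3 divides I. -/
/-!
Everything happens modulo 3. Since `3 ∤ b` and `b² + c² ≡ 1`, we get `3 ∣ c`; writing `b = 2k`, the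
relation defining `p` becomes `p ≡ (k(C² − D²))² + 1 + C² + D² (mod 3)` with `k² ≡ 1`, and this is
`≡ 0` unless `C ≡ D ≡ 0`. As `p ≥ 5` is prime, `3 ∤ p`, so `3 ∣ C`, `3 ∣ c`, and hence
`3 ∣ cC² − 2bCD − cD² = ±4I`.
-/

lemma ZMod.three_eq_zero_of_sq_add_sq_eq_one :
    ∀ b c : ZMod 3, b ≠ 0 → b ^ 2 + c ^ 2 = 1 → c = 0 := by
  decide

lemma ZMod.three_eq_zero_of_norm_ne_zero :
    ∀ k c C D p : ZMod 3, k ≠ 0 → c = 0 → p ≠ 0 →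
      16 * p = (k * (C ^ 2 - D ^ 2) + c * C * D) ^ 2 + ((k + k) ^ 2 + c ^ 2) * (1 + C ^ 2 + D ^ 2) →
      C = 0 ∧ D = 0 := by
  decide

lemma Int.cast_zmod_three_ne_zero {a : ℤ} (ha : ¬ 3 ∣ a) : (a : ZMod 3) ≠ 0 :=
  mt (ZMod.intCast_zmod_eq_zero_iff_dvd a 3).mp ha

lemma Int.not_three_dvd_of_prime {p : ℤ} (hp : Prime p) (hp5 : 5 ≤ p) : ¬ 3 ∣ p := fun h => by
  rcases Int.associated_iff.mp (Int.prime_three.associated_of_dvd hp h) with h | h <;> omega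

lemma Int.three_dvd_of_sq_add_sq_emod_three {b c : ℤ} (hb : ¬ 3 ∣ b)
    (hbc : (b ^ 2 + c ^ 2) % 3 = 1) : 3 ∣ c := by
  have hcast : (b : ZMod 3) ^ 2 + (c : ZMod 3) ^ 2 = 1 := by
    have := ZMod.intCast_mod (b ^ 2 + c ^ 2) 3
    push_cast [hbc] at this
    exact this.symm
  exact (ZMod.intCast_zmod_eq_zero_iff_dvd c 3).mp
    (ZMod.three_eq_zero_of_sq_add_sq_eq_one _ _ (Int.cast_zmod_three_ne_zero hb) hcast)

lemma Int.three_dvd_of_norm_not_three_dvd {k c C D p : ℤ} (hk : ¬ 3 ∣ k) (hc : 3 ∣ c)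
    (hp : ¬ 3 ∣ p)
    (h : 16 * p = (k * (C ^ 2 - D ^ 2) + c * C * D) ^ 2 + ((k + k) ^ 2 + c ^ 2) * (1 + C ^ 2 + D ^ 2)) :
    3 ∣ C ∧ 3 ∣ D := by
  have hcast := congrArg (Int.cast : ℤ → ZMod 3) h
  push_cast at hcast
  obtain ⟨hC, hD⟩ := ZMod.three_eq_zero_of_norm_ne_zero _ _ _ _ _ (Int.cast_zmod_three_ne_zero hk)
    ((ZMod.intCast_zmod_eq_zero_iff_dvd c 3).mpr hc) (Int.cast_zmod_three_ne_zero hp) hcast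
  exact ⟨(ZMod.intCast_zmod_eq_zero_iff_dvd C 3).mp hC, (ZMod.intCast_zmod_eq_zero_iff_dvd D 3).mp hD⟩

/-- Let `b, c` be integers, `b` even, `3 ∤ b`, `d = b² + c² ≡ 13 (mod 24)`.
If `p = (1/16)(((b/2)(C² − D²) + cCD)² + d(1 + C² + D²))` is a prime `≥ 5` and
`I = (1/4)|cC² − 2bCD − cD²|` is an integer, then `3 ∣ I`. -/
theorem stmt12 (b c : ℤ) (hb : Even b) (h3b : ¬(3 : ℤ) ∣ b)
    (hd : (b ^ 2 + c ^ 2) % 24 = 13) (C D p I : ℤ)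
    (hpdef : 16 * p = ((b / 2) * (C ^ 2 - D ^ 2) + c * C * D) ^ 2
        + (b ^ 2 + c ^ 2) * (1 + C ^ 2 + D ^ 2))
    (hpprime : Prime p) (hp5 : 5 ≤ p)
    (hI : 4 * I = |c * C ^ 2 - 2 * b * C * D - c * D ^ 2|) :
    (3 : ℤ) ∣ I := by
  have hc : 3 ∣ c := Int.three_dvd_of_sq_add_sq_emod_three h3b (by omega)
  obtain ⟨k, rfl⟩ := hb
  rw [show (k + k) / 2 = k by omega] at hpdef
  obtain ⟨hC, -⟩ := Int.three_dvd_of_norm_not_three_dvd (by omega) hc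
    (Int.not_three_dvd_of_prime hpprime hp5) hpdef
  have hdiff : 3 ∣ c * C ^ 2 - 2 * (k + k) * C * D - c * D ^ 2 :=
    dvd_sub (dvd_sub (hc.mul_right _) ((hC.mul_left _).mul_right D)) (hc.mul_right _)
  have h4I : (3 : ℤ) ∣ 4 * I := hI ▸ (dvd_abs _ _).mpr hdiff
  omega
end

section
/- Let b, c be positive real numbers, set d = b² + c², ε = (−c + √d)/b and ε′ = (−c − √d)/b. For real numbers C, D define U = C − εD and V = C − ε′D. Then (1/16)·(((b/2)C² + cCD − (b/2)D²)² + d·(1 + C² + D²)) = (1/16)·((b/2)U² + ε√d)·((b/2)V² − ε′√d), and (1/4)·|cC² − 2bCD − cD²| = (b/8)·|ε′·(U − εV)·(U + εV)|. -/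
/-!
The numbers `ε, ε'` are the roots of `b X² + 2c X - b`, so `ε ε' = -1`, `b (ε + ε') = -2c` and
`b (ε - ε') = 2√d`. Both factorizations are then identities in `ε, ε', C, D` modulo `ε ε' + 1`:
`(b/2) U V = (b/2) C² + c C D - (b/2) D²`, and `ε V² - ε' U² = (ε - ε')(C² + D²)` supplies the
term `d (C² + D²)` of the norm, while `ε' (U - ε V)(U + ε V) = (ε + ε')(C² - D²) + 4 C D` is
`-2/b` times the index form.
-/

section ConjugateUnits

variable {R : Type*} [CommRing R] {ε ε' : R}

theorem mul_sub_mul_sub_of_mul_eq_neg_one (h : ε * ε' = -1) (C D : R) :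
    (C - ε * D) * (C - ε' * D) = C ^ 2 - (ε + ε') * C * D - D ^ 2 := by
  linear_combination D ^ 2 * h

theorem mul_sq_sub_mul_sq_of_mul_eq_neg_one (h : ε * ε' = -1) (C D : R) :
    ε * (C - ε' * D) ^ 2 - ε' * (C - ε * D) ^ 2 = (ε - ε') * (C ^ 2 + D ^ 2) := by
  linear_combination (ε' - ε) * D ^ 2 * h

theorem add_mul_sq_mul_sub_mul_sq_of_mul_eq_neg_one (h : ε * ε' = -1) (a s C D : R) :
    (a * (C - ε * D) ^ 2 + ε * s) * (a * (C - ε' * D) ^ 2 - ε' * s)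
      = (a * ((C - ε * D) * (C - ε' * D))) ^ 2 + a * s * (ε - ε') * (C ^ 2 + D ^ 2) + s ^ 2 := by
  linear_combination a * s * mul_sq_sub_mul_sq_of_mul_eq_neg_one h C D - s ^ 2 * h

theorem mul_sub_mul_add_of_mul_eq_neg_one (h : ε * ε' = -1) (C D : R) :
    ε' * ((C - ε * D) - ε * (C - ε' * D)) * ((C - ε * D) + ε * (C - ε' * D))
      = (ε + ε') * (C ^ 2 - D ^ 2) + 4 * C * D := by
  linear_combination
    (-ε * C ^ 2 + 2 * (ε * ε' - 2) * C * D + (ε + ε' * (1 - ε * ε')) * D ^ 2) * h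

end ConjugateUnits

theorem quadratic_roots_mul_add_sub {b c : ℝ} (hb : b ≠ 0) :
    let s := √(b ^ 2 + c ^ 2)
    ((-c + s) / b) * ((-c - s) / b) = -1 ∧
      b * ((-c + s) / b + (-c - s) / b) = -2 * c ∧
      b * ((-c + s) / b - (-c - s) / b) = 2 * s := by
  intro s
  have hs : s ^ 2 = b ^ 2 + c ^ 2 := Real.sq_sqrt (by positivity)
  refine ⟨?_, ?_, ?_⟩
  · field_simp
    linear_combination -hs
  · field_simp
    ring
  · field_simp
    ring

theorem stmt13_general (b c : ℝ) (hb : 0 < b) (C D : ℝ) :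
    let d : ℝ := b ^ 2 + c ^ 2
    let ε : ℝ := (-c + Real.sqrt d) / b
    let ε' : ℝ := (-c - Real.sqrt d) / b
    let U : ℝ := C - ε * D
    let V : ℝ := C - ε' * D
    (1 / 16) * (((b / 2) * C ^ 2 + c * C * D - (b / 2) * D ^ 2) ^ 2
          + d * (1 + C ^ 2 + D ^ 2))
        = (1 / 16) * ((b / 2) * U ^ 2 + ε * Real.sqrt d) * ((b / 2) * V ^ 2 - ε' * Real.sqrt d) ∧
    (1 / 4) * |c * C ^ 2 - 2 * b * C * D - c * D ^ 2|
        = (b / 8) * |ε' * (U - ε * V) * (U + ε * V)| := by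
  intro d ε ε' U V
  obtain ⟨hprod, hsum, hdiff⟩ := quadratic_roots_mul_add_sub (c := c) hb.ne'
  have hs : √d ^ 2 = d := Real.sq_sqrt (by positivity)
  have hUV : (b / 2) * (U * V) = (b / 2) * C ^ 2 + c * C * D - (b / 2) * D ^ 2 := by
    rw [mul_sub_mul_sub_of_mul_eq_neg_one hprod]
    linear_combination (-C * D / 2) * hsum
  have hindex : b * (ε' * (U - ε * V) * (U + ε * V)) = -2 * (c * C ^ 2 - 2 * b * C * D - c * D ^ 2) := by
    rw [mul_sub_mul_add_of_mul_eq_neg_one hprod]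
    linear_combination (C ^ 2 - D ^ 2) * hsum
  constructor
  · linear_combination (-1 / 16) * add_mul_sq_mul_sub_mul_sq_of_mul_eq_neg_one hprod (b / 2) √d C D
      - (1 / 16) * ((b / 2) * (U * V) + (b / 2) * C ^ 2 + c * C * D - (b / 2) * D ^ 2) * hUV
      - (1 / 32) * √d * (C ^ 2 + D ^ 2) * hdiff - (1 / 16) * (1 + C ^ 2 + D ^ 2) * hs
  · have habs := congrArg abs hindex
    rw [abs_mul b, abs_mul (-2 : ℝ), abs_of_pos hb, abs_neg, abs_two] at habs
    linarith

/-- With `d = b² + c²`, `ε = (−c + √d)/b`, `ε′ = (−c − √d)/b`,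
`U = C − εD`, `V = C − ε′D`, one has the two factorizations
`(1/16)(((b/2)C² + cCD − (b/2)D²)² + d(1 + C² + D²)) = (1/16)((b/2)U² + ε√d)((b/2)V² − ε′√d)`
and `(1/4)|cC² − 2bCD − cD²| = (b/8)|ε′(U − εV)(U + εV)|`. -/
theorem stmt13 (b c : ℝ) (hb : 0 < b) (hc : 0 < c) (C D : ℝ) :
    let d : ℝ := b ^ 2 + c ^ 2
    let ε : ℝ := (-c + Real.sqrt d) / b
    let ε' : ℝ := (-c - Real.sqrt d) / b
    let U : ℝ := C - ε * D
    let V : ℝ := C - ε' * D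
    (1 / 16) * (((b / 2) * C ^ 2 + c * C * D - (b / 2) * D ^ 2) ^ 2
          + d * (1 + C ^ 2 + D ^ 2))
        = (1 / 16) * ((b / 2) * U ^ 2 + ε * Real.sqrt d) * ((b / 2) * V ^ 2 - ε' * Real.sqrt d) ∧
    (1 / 4) * |c * C ^ 2 - 2 * b * C * D - c * D ^ 2|
        = (b / 8) * |ε' * (U - ε * V) * (U + ε * V)| :=
  stmt13_general b c hb C D
end

section
/- Let K ⊂ ℂ be a number field of degree 4 that is Galois over ℚ with cyclic Galois group generated by σ. Let d be a squarefree integer with d > 1 and let δ ∈ O_K satisfy δ² = d. Let π ∈ O_K and m ∈ ℤ satisfy π·σ²(π) = m and π − σ(π) + σ²(π) − σ³(π) = δ. If l is a prime number such that the ideal l·O_K is a prime ideal of O_K (i.e., l is inert in K/ℚ), then l does not divide m. -/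
/-!
Since `l·O_K` is a prime ideal stable under `σ`, `l ∣ π·σ²(π)` forces `l ∣ π` and `l ∣ σ²(π)`,
hence `l` divides `δ = (π + σ²(π)) − σ(π + σ²(π))`. Then `l² ∣ δ² = d` in `O_K`, and since `O_K` is
faithfully flat over `ℤ`, already in `ℤ`, contradicting that `d` is squarefree.
-/

open NumberField

theorem algebraMap_dvd_algebraMap_iff_of_faithfullyFlat {A B : Type*} [CommRing A] [CommRing B]
    [Algebra A B] [Module.FaithfullyFlat A B] {a b : A} :
    algebraMap A B a ∣ algebraMap A B b ↔ a ∣ b := by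
  simp only [← Ideal.mem_span_singleton]
  rw [← Ideal.mem_comap, ← Set.image_singleton, ← Ideal.map_span,
    Ideal.comap_map_eq_self_of_faithfullyFlat]

theorem NumberField.RingOfIntegers.intCast_dvd_intCast_iff {K : Type*} [Field K] [NumberField K]
    {a b : ℤ} :
    (a : 𝓞 K) ∣ (b : 𝓞 K) ↔ a ∣ b := by
  simpa only [algebraMap_int_eq, eq_intCast] using
    algebraMap_dvd_algebraMap_iff_of_faithfullyFlat (A := ℤ) (B := 𝓞 K) (a := a) (b := b)

section RingEquiv

variable {A : Type*} [CommRing A] (τ : A ≃+* A) {n : ℕ}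

theorem natCast_dvd_ringEquiv_apply_iff {x : A} : (n : A) ∣ τ x ↔ (n : A) ∣ x := by
  simpa only [map_natCast] using map_dvd_iff τ (a := (n : A)) (b := x)

theorem natCast_dvd_of_dvd_mul_apply_apply (hn : (Ideal.span {(n : A)}).IsPrime) {x : A}
    (h : (n : A) ∣ x * τ (τ x)) : (n : A) ∣ x := by
  simp only [← Ideal.mem_span_singleton] at h ⊢
  rcases hn.mem_or_mem h with hx | hx
  · exact hx
  · simpa only [Ideal.mem_span_singleton, natCast_dvd_ringEquiv_apply_iff] using hx

theorem natCast_dvd_alternating_sum_of_dvd_mul_apply_apply (hn : (Ideal.span {(n : A)}).IsPrime)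
    {x : A} (h : (n : A) ∣ x * τ (τ x)) : (n : A) ∣ x - τ x + τ (τ x) - τ (τ (τ x)) := by
  have hx := natCast_dvd_of_dvd_mul_apply_apply τ hn h
  have hsum : (n : A) ∣ x + τ (τ x) :=
    dvd_add hx ((natCast_dvd_ringEquiv_apply_iff τ).2 ((natCast_dvd_ringEquiv_apply_iff τ).2 hx))
  have : x - τ x + τ (τ x) - τ (τ (τ x)) = (x + τ (τ x)) - τ (x + τ (τ x)) := by
    rw [map_add]; ring
  rw [this]
  exact dvd_sub hsum ((natCast_dvd_ringEquiv_apply_iff τ).2 hsum)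

end RingEquiv

theorem stmt14_general (K : Type*) [Field K] [NumberField K]
    (σ : K ≃ₐ[ℚ] K)
    (d : ℤ) (hd : Squarefree d)
    (δ : NumberField.RingOfIntegers K) (hδ : δ ^ 2 = (d : NumberField.RingOfIntegers K))
    (π : NumberField.RingOfIntegers K) (m : ℤ)
    (hm : (π : K) * σ (σ (π : K)) = (m : K))
    (hδ2 : (π : K) - σ (π : K) + σ (σ (π : K)) - σ (σ (σ (π : K))) = (δ : K))
    (l : ℕ) (hl : l.Prime)
    (hinert : (Ideal.span {(l : NumberField.RingOfIntegers K)}).IsPrime) :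
    ¬(l : ℤ) ∣ m := by
  intro hlm
  set τ := RingOfIntegers.mapRingEquiv σ.toRingEquiv
  have hmτ : π * τ (τ π) = (m : 𝓞 K) := RingOfIntegers.ext (by simpa [τ] using hm)
  have hδτ : π - τ π + τ (τ π) - τ (τ (τ π)) = δ := RingOfIntegers.ext (by simpa [τ] using hδ2)
  have hlδ : (l : 𝓞 K) ∣ δ := by
    rw [← hδτ]
    refine natCast_dvd_alternating_sum_of_dvd_mul_apply_apply τ hinert ?_
    rw [hmτ]
    exact_mod_cast Int.cast_dvd_cast _ _ hlm
  have hl2d : (l : ℤ) * l ∣ d := by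
    rw [← RingOfIntegers.intCast_dvd_intCast_iff (K := K), ← hδ, sq]
    push_cast
    exact mul_dvd_mul hlδ hlδ
  exact hl.ne_one (Nat.isUnit_iff.mp (Int.ofNat_isUnit.mp (hd _ hl2d)))

/-- Let `K` be a quartic number field, Galois over `ℚ` with cyclic Galois group
generated by `σ`. Let `d > 1` be squarefree and `δ ∈ O_K` with `δ² = d`. Let `π ∈ O_K` and
`m ∈ ℤ` satisfy `π·σ²(π) = m` and `π − σ(π) + σ²(π) − σ³(π) = δ`. If `l` is a prime such that
`l·O_K` is a prime ideal of `O_K` (i.e. `l` is inert in `K/ℚ`), then `l ∤ m`. -/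
theorem stmt14 (K : Type*) [Field K] [NumberField K]
    (hdeg : Module.finrank ℚ K = 4) [IsGalois ℚ K]
    (σ : K ≃ₐ[ℚ] K) (hcyc : ∀ τ : K ≃ₐ[ℚ] K, τ ∈ Subgroup.zpowers σ)
    (d : ℤ) (hd : Squarefree d) (hd1 : 1 < d)
    (δ : NumberField.RingOfIntegers K) (hδ : δ ^ 2 = (d : NumberField.RingOfIntegers K))
    (π : NumberField.RingOfIntegers K) (m : ℤ)
    (hm : (π : K) * σ (σ (π : K)) = (m : K))
    (hδ2 : (π : K) - σ (π : K) + σ (σ (π : K)) - σ (σ (σ (π : K))) = (δ : K))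
    (l : ℕ) (hl : l.Prime)
    (hinert : (Ideal.span {(l : NumberField.RingOfIntegers K)}).IsPrime) :
    ¬(l : ℤ) ∣ m :=
  stmt14_general K σ d hd δ hδ π m hm hδ2 l hl hinert
end

section
/- Let l be an odd prime and let b, c be integers with l not dividing b and l not dividing d, where d = b² + c². Suppose there exist s, w ∈ ZMod l with s² = d and w² = −2d + 2cs (computing d, b, c modulo l). Then the number of pairs (C, D) ∈ (ZMod l)² such that both ((b·2⁻¹)·C² + cCD − (b·2⁻¹)·D²)² + d·(C² + D² + 1) ≠ 0 and cC² − 2bCD − cD² ≠ 0 in ZMod l equals (l − 3)². -/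
open Finset

/-- Auxiliary counting lemma: in a finite field of odd characteristic, the number of pairs
`(x, z)` with `x² ≠ r²`, `z² ≠ r²` and `x² ≠ z²` (for a fixed nonzero `r`) is `(q - 3)²`. -/
lemma stmt16_count {F : Type*} [Field F] [Fintype F] [DecidableEq F] (r : F)
    (hr : r ≠ 0) (h2 : (2 : F) ≠ 0) :
    (univ.filter fun xz : F × F =>
        xz.1 ^ 2 ≠ r ^ 2 ∧ xz.2 ^ 2 ≠ r ^ 2 ∧ xz.1 ^ 2 ≠ xz.2 ^ 2).card
      = (Fintype.card F - 3) ^ 2 := by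
  classical
  have hrr : r ≠ -r := by
    intro h
    apply hr
    have h' : (2:F) * r = 0 := by linear_combination h
    rcases mul_eq_zero.1 h' with h'' | h''
    · exact absurd h'' h2
    · exact h''
  have h0r : (0:F) ≠ r := Ne.symm hr
  have h0nr : (0:F) ≠ -r := fun h => hr (neg_eq_zero.1 h.symm)
  have h0mem : (0:F) ∉ ({r, -r} : Finset F) := by
    simp only [mem_insert, mem_singleton]; push_neg; exact ⟨h0r, h0nr⟩
  have hrset : ({r, -r} : Finset F).card = 2 := by
    rw [card_insert_of_notMem (by simp [hrr]), card_singleton]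
  have h3set : ({0, r, -r} : Finset F).card = 3 := by
    rw [card_insert_of_notMem h0mem, hrset]
  set A : Finset F := ({r, -r} : Finset F)ᶜ with hA
  have key : (univ.filter fun xz : F × F =>
        xz.1 ^ 2 ≠ r ^ 2 ∧ xz.2 ^ 2 ≠ r ^ 2 ∧ xz.1 ^ 2 ≠ xz.2 ^ 2)
      = A.biUnion (fun x => {x} ×ˢ (insert x (insert (-x) ({r, -r} : Finset F)))ᶜ) := by
    ext ⟨x, z⟩
    simp only [mem_filter, mem_univ, true_and, mem_biUnion, mem_product, mem_singleton,
      mem_compl, mem_insert, hA]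
    constructor
    · rintro ⟨h1, h2', h3⟩
      refine ⟨x, ?_, rfl, ?_⟩
      · push_neg
        constructor
        · intro h; exact h1 (by rw [h])
        · intro h; apply h1; rw [h]; ring
      · push_neg
        refine ⟨?_, ?_, ?_, ?_⟩
        · intro h; exact h3 (by rw [h])
        · intro h; apply h3; rw [h]; ring
        · intro h; exact h2' (by rw [h])
        · intro h; apply h2'; rw [h]; ring
    · rintro ⟨y, hy, rfl, hz⟩
      push_neg at hy hz
      obtain ⟨hz1, hz2, hz3, hz4⟩ := hz
      refine ⟨?_, ?_, ?_⟩
      · intro h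
        rcases (sq_eq_sq_iff_eq_or_eq_neg).1 h with h | h
        · exact hy.1 h
        · exact hy.2 h
      · intro h
        rcases (sq_eq_sq_iff_eq_or_eq_neg).1 h with h | h
        · exact hz3 h
        · exact hz4 h
      · intro h
        rcases (sq_eq_sq_iff_eq_or_eq_neg).1 h.symm with h | h
        · exact hz1 h
        · exact hz2 h
  rw [key, card_biUnion]
  swap
  · intro x hx y hy hxy
    simp only [disjoint_left, mem_product, mem_singleton]
    rintro ⟨a, b⟩ ⟨rfl, -⟩ ⟨rfl, -⟩
    exact hxy rfl
  have hcard : ∀ x ∈ A, ({x} ×ˢ (insert x (insert (-x) ({r, -r} : Finset F)))ᶜ).card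
      = Fintype.card F - (insert x (insert (-x) ({r, -r} : Finset F))).card := by
    intro x _
    rw [card_product, card_singleton, one_mul, card_compl]
  rw [Finset.sum_congr rfl hcard]
  set B : Finset F := ({0, r, -r} : Finset F)ᶜ with hB
  have hAB : A = insert 0 B := by
    rw [hA, hB]
    ext x
    simp only [mem_insert, mem_compl, mem_insert, mem_singleton]
    by_cases hx0 : x = 0
    · subst hx0; simp [h0r, h0nr]
    · tauto
  have h0B : (0:F) ∉ B := by simp [hB]
  rw [hAB, Finset.sum_insert h0B]
  have hT0 : (insert (0:F) (insert (-0) ({r, -r} : Finset F))).card = 3 := by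
    rw [neg_zero, insert_idem, card_insert_of_notMem h0mem, hrset]
  rw [hT0]
  have hTB : ∀ x ∈ B, Fintype.card F - (insert x (insert (-x) ({r, -r} : Finset F))).card
      = Fintype.card F - 4 := by
    intro x hx
    simp only [hB, mem_compl, mem_insert, mem_singleton] at hx
    push_neg at hx
    obtain ⟨hx0, hxr, hxnr⟩ := hx
    have h1 : x ∉ insert (-x) ({r, -r} : Finset F) := by
      simp only [mem_insert, mem_singleton]
      push_neg
      refine ⟨?_, hxr, hxnr⟩
      intro h
      apply hx0
      have h' : (2:F) * x = 0 := by linear_combination h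
      rcases mul_eq_zero.1 h' with h'' | h''
      · exact absurd h'' h2
      · exact h''
    have hnx : (-x) ∉ ({r, -r} : Finset F) := by
      simp only [mem_insert, mem_singleton]
      push_neg
      constructor
      · intro h; exact hxnr (by rw [← h, neg_neg])
      · intro h; exact hxr (neg_injective h)
    rw [card_insert_of_notMem h1, card_insert_of_notMem hnx, hrset]
  rw [Finset.sum_congr rfl hTB, Finset.sum_const, smul_eq_mul]
  have hBcard : B.card = Fintype.card F - 3 := by
    rw [hB, card_compl, h3set]
  rw [hBcard]
  have hq : 3 ≤ Fintype.card F := by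
    calc 3 = ({0, r, -r} : Finset F).card := h3set.symm
      _ ≤ Fintype.card F := (Finset.card_le_univ _).trans_eq card_univ
  set q := Fintype.card F
  rcases Nat.lt_or_ge q 4 with h4 | h4
  · interval_cases q <;> simp
  · have e2 : q - 3 = (q - 4) + 1 := by omega
    rw [e2]
    ring

/-- Let `l` be an odd prime, `l ∤ b`, `l ∤ d` where `d = b² + c²`, and suppose
there are `s, w ∈ ZMod l` with `s² = d` and `w² = −2d + 2cs` (i.e. `l` splits completely in
`K = ℚ(√(−d − b√d))`). Then the number of pairs `(C, D) ∈ (ZMod l)²` with both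
`((b·2⁻¹)C² + cCD − (b·2⁻¹)D²)² + d(C² + D² + 1) ≠ 0` and `cC² − 2bCD − cD² ≠ 0`
equals `(l − 3)²`. -/
theorem stmt16 (l : ℕ) [Fact l.Prime] (hl : Odd l) (b c : ℤ)
    (hlb : ¬(l : ℤ) ∣ b) (hld : ¬(l : ℤ) ∣ (b ^ 2 + c ^ 2))
    (hex : ∃ s w : ZMod l, s ^ 2 = ((b ^ 2 + c ^ 2 : ℤ) : ZMod l) ∧
        w ^ 2 = -2 * ((b ^ 2 + c ^ 2 : ℤ) : ZMod l) + 2 * (c : ZMod l) * s) :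
    (Finset.univ.filter fun CD : ZMod l × ZMod l =>
        (((b : ZMod l) * (2 : ZMod l)⁻¹) * CD.1 ^ 2 + (c : ZMod l) * CD.1 * CD.2
              - ((b : ZMod l) * (2 : ZMod l)⁻¹) * CD.2 ^ 2) ^ 2
            + ((b ^ 2 + c ^ 2 : ℤ) : ZMod l) * (CD.1 ^ 2 + CD.2 ^ 2 + 1) ≠ 0 ∧
          (c : ZMod l) * CD.1 ^ 2 - 2 * (b : ZMod l) * CD.1 * CD.2
            - (c : ZMod l) * CD.2 ^ 2 ≠ 0).card
      = (l - 3) ^ 2 := by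
  classical
  obtain ⟨s, w, hs, hw⟩ := hex
  have hβ : (b : ZMod l) ≠ 0 := by
    rwa [Ne, ZMod.intCast_zmod_eq_zero_iff_dvd]
  have hδ0 : ((b ^ 2 + c ^ 2 : ℤ) : ZMod l) ≠ 0 := by
    rwa [Ne, ZMod.intCast_zmod_eq_zero_iff_dvd]
  have h2 : (2 : ZMod l) ≠ 0 := by
    have h2' : ((2 : ℕ) : ZMod l) ≠ 0 := by
      rw [Ne, ZMod.natCast_eq_zero_iff]
      intro h
      have heq := (Nat.prime_dvd_prime_iff_eq (Fact.out : l.Prime) Nat.prime_two).1 h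
      rw [heq] at hl
      exact (by decide : ¬ Odd 2) hl
    simpa using h2'
  set β : ZMod l := (b : ZMod l) with hβdef
  set γ : ZMod l := (c : ZMod l) with hγdef
  have hδ' : ((b ^ 2 + c ^ 2 : ℤ) : ZMod l) = β ^ 2 + γ ^ 2 := by push_cast; ring
  rw [hδ'] at hs hw hδ0
  have hsne : s ≠ 0 := by
    intro h; rw [h] at hs; exact hδ0 (by rw [← hs]; ring)
  have ha : γ - s ≠ 0 := by
    intro h
    have hγs : γ = s := by linear_combination h
    have hb2 : β ^ 2 = 0 := by linear_combination -hs - (γ + s) * h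
    exact hβ (pow_eq_zero_iff (by norm_num) |>.1 hb2)
  have he : γ + s ≠ 0 := by
    intro h
    have hb2 : β ^ 2 = 0 := by linear_combination -hs - (γ - s) * h
    exact hβ (pow_eq_zero_iff (by norm_num) |>.1 hb2)
  have hw2 : w ^ 2 = 2 * s * (γ - s) := by linear_combination hw + 2 * hs
  have hwne : w ≠ 0 := by
    intro h
    have hz : 2 * s * (γ - s) = 0 := by rw [← hw2, h]; ring
    rcases mul_eq_zero.1 hz with h' | h'
    · rcases mul_eq_zero.1 h' with h'' | h''
      · exact h2 h''
      · exact hsne h''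
    · exact ha h'
  set k : ZMod l := β * (γ - s)⁻¹ with hkdef
  set r : ZMod l := w * (γ - s)⁻¹ with hrdef
  have hrne : r ≠ 0 := mul_ne_zero hwne (inv_ne_zero ha)
  have hk1 : (γ - s) * k = β := by
    rw [hkdef]; field_simp
  have hk2 : (γ - s) * k ^ 2 = -(γ + s) := by
    have h' : (γ - s) * ((γ - s) * k ^ 2 + (γ + s)) = 0 := by
      linear_combination ((γ - s) * k + β) * hk1 - hs
    rcases mul_eq_zero.1 h' with h'' | h''
    · exact absurd h'' ha
    · linear_combination h''
  have hr1 : (γ - s) * r = w := by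
    rw [hrdef]; field_simp
  have hr2 : (γ - s) * r ^ 2 = 2 * s := by
    have h' : (γ - s) * ((γ - s) * r ^ 2 - 2 * s) = 0 := by
      linear_combination ((γ - s) * r + w) * hr1 + hw2
    rcases mul_eq_zero.1 h' with h'' | h''
    · exact absurd h'' ha
    · linear_combination h''
  have h1k : (1 : ZMod l) + k ^ 2 ≠ 0 := by
    intro h
    have hcontra : w ^ 2 = 0 := by
      linear_combination hw2 + (γ - s) * hk2 - (γ - s) ^ 2 * h
    exact hwne (pow_eq_zero_iff (by norm_num) |>.1 hcontra)
  -- the linear change of variables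
  set n : ZMod l := ((1 : ZMod l) + k ^ 2)⁻¹ with hndef
  have hn : ((1 : ZMod l) + k ^ 2) * n = 1 := by
    rw [hndef]; field_simp
  let σ : (ZMod l × ZMod l) ≃ (ZMod l × ZMod l) :=
    { toFun := fun p => (p.1 - k * p.2, k * p.1 + p.2)
      invFun := fun q => (n * (q.1 + k * q.2), n * (q.2 - k * q.1))
      left_inv := by
        rintro ⟨C, D⟩
        have e1 : n * ((C - k * D) + k * (k * C + D)) = C := by
          have : n * ((C - k * D) + k * (k * C + D)) = C * ((1 + k ^ 2) * n) := by ring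
          rw [this, hn, mul_one]
        have e2 : n * ((k * C + D) - k * (C - k * D)) = D := by
          have : n * ((k * C + D) - k * (C - k * D)) = D * ((1 + k ^ 2) * n) := by ring
          rw [this, hn, mul_one]
        simp only [Prod.mk.injEq]
        exact ⟨e1, e2⟩
      right_inv := by
        rintro ⟨x, z⟩
        have e1 : n * (x + k * z) - k * (n * (z - k * x)) = x := by
          have : n * (x + k * z) - k * (n * (z - k * x)) = x * ((1 + k ^ 2) * n) := by ring
          rw [this, hn, mul_one]
        have e2 : k * (n * (x + k * z)) + n * (z - k * x) = z := by
          have : k * (n * (x + k * z)) + n * (z - k * x) = z * ((1 + k ^ 2) * n) := by ring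
          rw [this, hn, mul_one]
        simp only [Prod.mk.injEq]
        exact ⟨e1, e2⟩ }
  rw [hδ']
  have hmain : (Finset.univ.filter fun CD : ZMod l × ZMod l =>
        ((β * (2 : ZMod l)⁻¹) * CD.1 ^ 2 + γ * CD.1 * CD.2
              - (β * (2 : ZMod l)⁻¹) * CD.2 ^ 2) ^ 2
            + (β ^ 2 + γ ^ 2) * (CD.1 ^ 2 + CD.2 ^ 2 + 1) ≠ 0 ∧
          γ * CD.1 ^ 2 - 2 * β * CD.1 * CD.2 - γ * CD.2 ^ 2 ≠ 0).card
      = (univ.filter fun xz : ZMod l × ZMod l =>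
          xz.1 ^ 2 ≠ r ^ 2 ∧ xz.2 ^ 2 ≠ r ^ 2 ∧ xz.1 ^ 2 ≠ xz.2 ^ 2).card := by
    apply Finset.card_equiv σ
    rintro ⟨C, D⟩
    simp only [mem_filter, mem_univ, true_and, σ, Equiv.coe_fn_mk]
    set x : ZMod l := C - k * D with hxdef
    set z : ZMod l := k * C + D with hzdef
    have hhb : (2 : ZMod l) * (β * (2 : ZMod l)⁻¹) = β := by field_simp
    have hax : (γ - s) * x ^ 2
        = (γ * C ^ 2 - 2 * β * C * D - γ * D ^ 2) - s * (C ^ 2 + D ^ 2) := by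
      rw [hxdef]
      linear_combination (-2 * C * D) * hk1 + (D ^ 2) * hk2
    have haz : (γ - s) * z ^ 2
        = -((γ * C ^ 2 - 2 * β * C * D - γ * D ^ 2) + s * (C ^ 2 + D ^ 2)) := by
      rw [hzdef]
      linear_combination (C ^ 2) * hk2 + (2 * C * D) * hk1
    -- main identity for the first condition
    have hE : (4 : ZMod l) * (((β * (2 : ZMod l)⁻¹) * C ^ 2 + γ * C * D
              - (β * (2 : ZMod l)⁻¹) * D ^ 2) ^ 2
            + (β ^ 2 + γ ^ 2) * (C ^ 2 + D ^ 2 + 1))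
        = (γ - s) ^ 2 * (r ^ 2 - x ^ 2) * (r ^ 2 - z ^ 2) := by
      have step1 : (γ - s) ^ 2 * (r ^ 2 - x ^ 2) * (r ^ 2 - z ^ 2)
          = ((γ - s) * r ^ 2 - (γ - s) * x ^ 2) * ((γ - s) * r ^ 2 - (γ - s) * z ^ 2) := by
        ring
      rw [step1, hr2, hax, haz]
      have step4 : (2 * s - ((γ * C ^ 2 - 2 * β * C * D - γ * D ^ 2)
              - s * (C ^ 2 + D ^ 2)))
            * (2 * s + ((γ * C ^ 2 - 2 * β * C * D - γ * D ^ 2) + s * (C ^ 2 + D ^ 2)))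
          = s ^ 2 * (C ^ 2 + D ^ 2 + 2) ^ 2
            - (γ * C ^ 2 - 2 * β * C * D - γ * D ^ 2) ^ 2 := by ring
      rw [show (2 * s - ((γ * C ^ 2 - 2 * β * C * D - γ * D ^ 2) - s * (C ^ 2 + D ^ 2)))
            * (2 * s - -((γ * C ^ 2 - 2 * β * C * D - γ * D ^ 2) + s * (C ^ 2 + D ^ 2)))
          = (2 * s - ((γ * C ^ 2 - 2 * β * C * D - γ * D ^ 2) - s * (C ^ 2 + D ^ 2)))
            * (2 * s + ((γ * C ^ 2 - 2 * β * C * D - γ * D ^ 2) + s * (C ^ 2 + D ^ 2)))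
          from by ring, step4]
      linear_combination (-(C ^ 2 + D ^ 2 + 2) ^ 2) * hs
        + ((2 : ZMod l) * ((β * (2 : ZMod l)⁻¹) * C ^ 2 + γ * C * D
            - (β * (2 : ZMod l)⁻¹) * D ^ 2)
          + (β * (C ^ 2 - D ^ 2) + 2 * γ * C * D)) * (C ^ 2 - D ^ 2) * hhb
    have h2L : (γ - s) * x ^ 2 - (γ - s) * z ^ 2
        = 2 * (γ * C ^ 2 - 2 * β * C * D - γ * D ^ 2) := by
      linear_combination hax - haz
    have h4 : (4 : ZMod l) ≠ 0 := by
      intro h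
      have : (2 : ZMod l) * 2 = 0 := by linear_combination h
      rcases mul_eq_zero.1 this with h' | h' <;> exact h2 h'
    constructor
    · rintro ⟨hE1, hL⟩
      refine ⟨?_, ?_, ?_⟩
      · intro h
        apply hE1
        have hz0 : (4 : ZMod l) * (((β * (2 : ZMod l)⁻¹) * C ^ 2 + γ * C * D
              - (β * (2 : ZMod l)⁻¹) * D ^ 2) ^ 2
            + (β ^ 2 + γ ^ 2) * (C ^ 2 + D ^ 2 + 1)) = 0 := by
          rw [hE, h]; ring
        rcases mul_eq_zero.1 hz0 with h' | h'
        · exact absurd h' h4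
        · exact h'
      · intro h
        apply hE1
        have hz0 : (4 : ZMod l) * (((β * (2 : ZMod l)⁻¹) * C ^ 2 + γ * C * D
              - (β * (2 : ZMod l)⁻¹) * D ^ 2) ^ 2
            + (β ^ 2 + γ ^ 2) * (C ^ 2 + D ^ 2 + 1)) = 0 := by
          rw [hE, h]; ring
        rcases mul_eq_zero.1 hz0 with h' | h'
        · exact absurd h' h4
        · exact h'
      · intro h
        apply hL
        have : (γ - s) * x ^ 2 - (γ - s) * z ^ 2 = 0 := by rw [h]; ring
        rw [h2L] at this
        rcases mul_eq_zero.1 this with h' | h'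
        · exact absurd h' h2
        · exact h'
    · rintro ⟨hx2, hz2, hxz⟩
      constructor
      · intro h
        have : (γ - s) ^ 2 * (r ^ 2 - x ^ 2) * (r ^ 2 - z ^ 2) = 0 := by
          rw [← hE, h]; ring
        rcases mul_eq_zero.1 this with h' | h'
        · rcases mul_eq_zero.1 h' with h'' | h''
          · exact (pow_ne_zero 2 ha) h''
          · exact hx2 (by linear_combination -h'')
        · exact hz2 (by linear_combination -h')
      · intro h
        have : (γ - s) * x ^ 2 - (γ - s) * z ^ 2 = 0 := by
          rw [h2L, h]; ring
        have hfac : (γ - s) * (x ^ 2 - z ^ 2) = 0 := by linear_combination this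
        rcases mul_eq_zero.1 hfac with h' | h'
        · exact ha h'
        · exact hxz (by linear_combination h')
  rw [hmain, stmt16_count r hrne h2, ZMod.card l]
end

section
/- Let l be an odd prime and let b, c, s ∈ ZMod l with b ≠ 0 and s² = b² + c². Write d = b² + c² ∈ ZMod l. Then −d − b·s and −d + b·s are both squares in ZMod l if and only if −2d + 2c·s is a square in ZMod l. -/
/-- Let `l` be an odd prime and `b, c, s ∈ ZMod l` with `b ≠ 0` and
`s² = b² + c²`; write `d = b² + c²`. Then `−d − bs` and `−d + bs` are both squares in
`ZMod l` if and only if `−2d + 2cs` is a square in `ZMod l`. -/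
theorem stmt18 (l : ℕ) [Fact l.Prime] (hl : Odd l) (b c s : ZMod l)
    (hb : b ≠ 0) (hs : s ^ 2 = b ^ 2 + c ^ 2) :
    (IsSquare (-(b ^ 2 + c ^ 2) - b * s) ∧ IsSquare (-(b ^ 2 + c ^ 2) + b * s)) ↔
      IsSquare (-2 * (b ^ 2 + c ^ 2) + 2 * c * s) := by
  have hl2 : l ≠ 2 := by rintro rfl; simp [Nat.odd_iff] at hl
  have h2 : (2 : ZMod l) ≠ 0 := by
    intro h
    have hdvd : (l : ℕ) ∣ 2 :=
      (ZMod.natCast_eq_zero_iff 2 l).mp (by exact_mod_cast h)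
    exact hl2 ((Nat.prime_dvd_prime_iff_eq Fact.out Nat.prime_two).mp hdvd)
  have key : ∀ a y r : ZMod l, a ≠ 0 → a * y = r ^ 2 → IsSquare a → IsSquare y := by
    rintro a y r ha h ⟨x, rfl⟩
    have hx0 : x ≠ 0 := fun h0 => ha (by rw [h0, mul_zero])
    exact ⟨r / x, by field_simp; linear_combination h⟩
  rw [← hs]
  by_cases hs0 : s = 0
  · subst hs0
    norm_num
  · have huw : (-s^2 - b*s) * (-2*s^2 + 2*c*s) = (s*(s+b-c))^2 := by
      linear_combination (s^2) * hs
    have hvw : (-s^2 + b*s) * (-2*s^2 + 2*c*s) = (s*(s-b-c))^2 := by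
      linear_combination (s^2) * hs
    constructor
    · rintro ⟨h1, h2'⟩
      by_cases h1z : (-s^2 - b*s : ZMod l) = 0
      · have hsb : s + b = 0 := by
          rcases mul_eq_zero.mp (show s * (s + b) = 0 by linear_combination -h1z) with h | h
          · exact absurd h hs0
          · exact h
        have hc : c = 0 := by
          have hc2 : c ^ 2 = 0 := by linear_combination -hs + (s - b) * hsb
          exact pow_eq_zero_iff (n := 2) (by norm_num) |>.mp hc2
        have hwv : (-2*s^2 + 2*c*s : ZMod l) = -s^2 + b*s := by
          rw [hc]; linear_combination (-s) * hsb
        rw [hwv]; exact h2'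
      · exact key (-s^2 - b*s) (-2*s^2 + 2*c*s) (s*(s+b-c)) h1z huw h1
    · intro hw
      by_cases hwz : (-2*s^2 + 2*c*s : ZMod l) = 0
      · exfalso
        have h2s : (2 : ZMod l) * s ≠ 0 := mul_ne_zero h2 hs0
        have hcz : (2 * s) * (c - s) = 0 := by linear_combination hwz
        have hcs : c = s := sub_eq_zero.mp ((mul_eq_zero.mp hcz).resolve_left h2s)
        have hb2 : b ^ 2 = 0 := by rw [hcs] at hs; linear_combination -hs
        exact hb (pow_eq_zero_iff (n := 2) (by norm_num) |>.mp hb2)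
      · exact ⟨key (-2*s^2 + 2*c*s) (-s^2 - b*s) (s*(s+b-c)) hwz (by linear_combination huw) hw,
          key (-2*s^2 + 2*c*s) (-s^2 + b*s) (s*(s-b-c)) hwz (by linear_combination hvw) hw⟩
end
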